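/- Let (T, ρ) be a finite metric tree and ν a probability measure on T supported on finitely many points. Define the barycenter set BC(ν) to be the set of points S ∈ T such that for every connected component U of T \ {S}, ν(U) ≤ 1/2. Then BC(ν) is nonempty. -/

import Mathlib

/-- `γ` is an arc-length geodesic segment from `a` to `b`. -/
def IsGeodesicSeg {T : Type*} [MetricSpace T] (a b : T) (γ : ℝ → T) : Prop :=
  γ 0 = a ∧ γ (dist a b) = b ∧
    ∀ s ∈ Set.Icc (0 : ℝ) (dist a b), ∀ t ∈ Set.Icc (0 : ℝ) (dist a b),
      dist (γ s) (γ t) = |s - t|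

/-- A finite metric tree: a compact, uniquely geodesic metric space which is the
union of finitely many geodesic segments (spanned by finitely many points). -/
def IsFinMetricTree (T : Type*) [MetricSpace T] : Prop :=
  CompactSpace T ∧
  (∀ a b : T, ∃ γ : ℝ → T, IsGeodesicSeg a b γ) ∧
  (∀ a b : T, ∀ γ₁ γ₂ : ℝ → T, IsGeodesicSeg a b γ₁ → IsGeodesicSeg a b γ₂ →
    Set.EqOn γ₁ γ₂ (Set.Icc 0 (dist a b))) ∧
  (∃ S : Finset T, ∀ x : T, ∃ a ∈ S, ∃ b ∈ S, ∃ γ : ℝ → T,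
    IsGeodesicSeg a b γ ∧ x ∈ γ '' Set.Icc 0 (dist a b))

/-- The barycenter set of a measure `ν` on a metric tree: the points `s` such that
every connected component of `T \ {s}` has `ν`-mass at most `1/2`. -/
def barycenterSet {T : Type*} [MetricSpace T] [MeasurableSpace T]
    (ν : MeasureTheory.Measure T) : Set T :=
  {s : T | ∀ x : T, x ≠ s → ν (connectedComponentIn ({s}ᶜ) x) ≤ 1 / 2}

open Set Metric
open scoped ENNReal

section Geo
variable {T : Type*} [MetricSpace T]
variable (hex : ∀ a b : T, ∃ γ : ℝ → T, IsGeodesicSeg a b γ)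
variable (hun : ∀ a b : T, ∀ γ₁ γ₂ : ℝ → T, IsGeodesicSeg a b γ₁ → IsGeodesicSeg a b γ₂ →
    Set.EqOn γ₁ γ₂ (Set.Icc 0 (dist a b)))

noncomputable def geo (a b : T) : ℝ → T := (hex a b).choose

lemma geo_spec (a b : T) : IsGeodesicSeg a b (geo hex a b) := (hex a b).choose_spec

lemma geo_zero (a b : T) : geo hex a b 0 = a := (geo_spec hex a b).1

lemma dist_geo_left {a b : T} {t : ℝ} (ht : t ∈ Icc 0 (dist a b)) :
    dist a (geo hex a b t) = t := by
  obtain ⟨h0, hd, hD⟩ := geo_spec hex a b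
  have := hD 0 ⟨le_refl 0, dist_nonneg⟩ t ht
  rw [h0] at this
  rw [this, abs_of_nonpos (by linarith [ht.1]), neg_sub, sub_zero]

lemma dist_geo_right {a b : T} {t : ℝ} (ht : t ∈ Icc 0 (dist a b)) :
    dist (geo hex a b t) b = dist a b - t := by
  obtain ⟨h0, hd, hD⟩ := geo_spec hex a b
  have := hD t ht (dist a b) ⟨dist_nonneg, le_refl _⟩
  rw [hd] at this
  rw [this, abs_of_nonpos (by linarith [ht.2]), neg_sub]

set_option linter.unusedSectionVars false
include hex hun

/-- The concatenation of geodesics with additive distances: if `dist m p = δ` and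
`dist m z = δ + dist p z`, then `p` is the point at distance `δ` on the geodesic from
`m` to `z`. -/
lemma between_gate {m p z : T} {δ : ℝ} (hδ0 : 0 ≤ δ) (hmp : dist m p = δ)
    (hmz : dist m z = δ + dist p z) : geo hex m z δ = p := by
  classical
  set γ : ℝ → T := fun t => if t ≤ δ then geo hex m p t else geo hex p z (t - δ) with hγ
  have hIcc1 : ∀ t, t ∈ Icc (0:ℝ) δ → t ∈ Icc 0 (dist m p) := by
    intro t ht; rw [hmp]; exact ht
  have hIcc2 : ∀ t, t ∈ Icc δ (dist m z) → t - δ ∈ Icc 0 (dist p z) := by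
    intro t ht; constructor <;> [linarith [ht.1]; linarith [ht.2]]
  have hpend : geo hex m p δ = p := by
    have := (geo_spec hex m p).2.1; rwa [hmp] at this
  -- γ at points ≤ δ and ≥ δ
  have hγle : ∀ t, t ≤ δ → γ t = geo hex m p t := by intro t ht; simp [hγ, ht]
  have hγge : ∀ t, δ ≤ t → γ t = geo hex p z (t - δ) := by
    intro t ht
    rcases eq_or_lt_of_le ht with h | h
    · subst h; simp [hγ, hpend, sub_self, geo_zero]
    · simp [hγ, not_le.2 h]
  have hgeo : IsGeodesicSeg m z γ := by
    refine ⟨?_, ?_, ?_⟩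
    · rw [hγle 0 hδ0, geo_zero]
    · have hδd : δ ≤ dist m z := by linarith [dist_nonneg (x := p) (y := z)]
      rw [hγge _ hδd]
      have := (geo_spec hex p z).2.1
      rw [show dist m z - δ = dist p z by linarith]
      exact this
    · -- distance identity
      have key : ∀ s ∈ Icc (0:ℝ) (dist m z), ∀ t ∈ Icc (0:ℝ) (dist m z), s ≤ t →
          dist (γ s) (γ t) = |s - t| := by
        intro s hs t ht hst
        rw [abs_of_nonpos (by linarith), neg_sub]
        rcases le_or_gt t δ with htδ | htδ
        · rw [hγle s (le_trans hst htδ), hγle t htδ]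
          have := (geo_spec hex m p).2.2 s (hIcc1 s ⟨hs.1, le_trans hst htδ⟩)
            t (hIcc1 t ⟨le_trans hs.1 hst, htδ⟩)
          rw [this, abs_of_nonpos (by linarith), neg_sub]
        · rcases le_or_gt s δ with hsδ | hsδ
          · -- s ≤ δ < t
            rw [hγle s hsδ, hγge t htδ.le]
            have h1 : dist (geo hex m p s) p = δ - s := by
              have := dist_geo_right hex (a := m) (b := p) (hIcc1 s ⟨hs.1, hsδ⟩)
              rwa [hmp] at this
            have h2 : dist p (geo hex p z (t - δ)) = t - δ := by
              exact dist_geo_left hex (hIcc2 t ⟨htδ.le, ht.2⟩)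
            have h3 : dist (geo hex p z (t - δ)) z = dist p z - (t - δ) :=
              dist_geo_right hex (hIcc2 t ⟨htδ.le, ht.2⟩)
            have h4 : dist m (geo hex m p s) = s := dist_geo_left hex (hIcc1 s ⟨hs.1, hsδ⟩)
            have hup : dist (geo hex m p s) (geo hex p z (t - δ)) ≤ t - s := by
              calc dist (geo hex m p s) (geo hex p z (t - δ))
                  ≤ dist (geo hex m p s) p + dist p (geo hex p z (t - δ)) := dist_triangle _ _ _
                _ = t - s := by rw [h1, h2]; ring
            have hlow : t - s ≤ dist (geo hex m p s) (geo hex p z (t - δ)) := by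
              have := dist_triangle4 m (geo hex m p s) (geo hex p z (t - δ)) z
              rw [h4, h3, hmz] at this
              linarith
            linarith
          · rw [hγge s hsδ.le, hγge t htδ.le]
            have := (geo_spec hex p z).2.2 (s - δ) (hIcc2 s ⟨hsδ.le, hs.2⟩)
              (t - δ) (hIcc2 t ⟨htδ.le, ht.2⟩)
            rw [this, abs_of_nonpos (by linarith), neg_sub]
            ring
      intro s hs t ht
      rcases le_total s t with h | h
      · exact key s hs t ht h
      · rw [dist_comm, abs_sub_comm]; exact key t ht s hs h
  have heq := hun m z γ (geo hex m z) hgeo (geo_spec hex m z)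
  have hδmem : δ ∈ Icc 0 (dist m z) := ⟨hδ0, by linarith [dist_nonneg (x := p) (y := z)]⟩
  have := heq hδmem
  rw [hγle δ le_rfl, hpend] at this
  exact this.symm

/-- Gates are coherent: the gate at level `δ` of `z` equals the gate at level `δ`
of the gate at level `δ₁` of `z`, for `δ ≤ δ₁`. -/
lemma gate_gate {m z : T} {δ δ₁ : ℝ} (hδ0 : 0 ≤ δ) (hδδ₁ : δ ≤ δ₁)
    (hδ₁ : δ₁ ∈ Icc 0 (dist m z)) :
    geo hex m z δ = geo hex m (geo hex m z δ₁) δ := by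
  set p := geo hex m z δ₁ with hp
  have hmp : dist m p = δ₁ := dist_geo_left hex hδ₁
  have hpz : dist p z = dist m z - δ₁ := dist_geo_right hex hδ₁
  set q := geo hex m p δ with hq
  have hδmem : δ ∈ Icc 0 (dist m p) := by rw [hmp]; exact ⟨hδ0, hδδ₁⟩
  have hmq : dist m q = δ := dist_geo_left hex hδmem
  have hqp : dist q p = δ₁ - δ := by have := dist_geo_right hex (a := m) (b := p) hδmem; rwa [hmp] at this
  have hqz : dist q z = dist m z - δ := by
    have h1 : dist q z ≤ dist m z - δ := by
      calc dist q z ≤ dist q p + dist p z := dist_triangle _ _ _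
        _ = dist m z - δ := by rw [hqp, hpz]; ring
    have h2 : dist m z - δ ≤ dist q z := by
      have := dist_triangle m q z; rw [hmq] at this; linarith
    linarith
  exact between_gate hex hun hδ0 hmq (by rw [hqz]; ring)


lemma arc_compact (a b : T) : IsCompact (geo hex a b '' Icc 0 (dist a b)) := by
  have hlip : LipschitzOnWith 1 (geo hex a b) (Icc 0 (dist a b)) := by
    rw [lipschitzOnWith_iff_dist_le_mul]
    intro x hx y hy
    rw [(geo_spec hex a b).2.2 x hx y hy, Real.dist_eq, NNReal.coe_one, one_mul]
  exact isCompact_Icc.image_of_continuousOn hlip.continuousOn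

lemma arc_nonempty (a b : T) : (geo hex a b '' Icc 0 (dist a b)).Nonempty :=
  ⟨geo hex a b 0, Set.mem_image_of_mem _ ⟨le_refl 0, dist_nonneg⟩⟩

lemma sphere_finite
    (hcov : ∃ S : Finset T, ∀ x : T, ∃ a ∈ S, ∃ b ∈ S, ∃ γ : ℝ → T,
      IsGeodesicSeg a b γ ∧ x ∈ γ '' Set.Icc 0 (dist a b)) (m : T) :
    ∃ r > 0, ∀ δ : ℝ, 0 < δ → δ < r → {p : T | dist m p = δ}.Finite := by
  classical
  obtain ⟨S₀, hS₀⟩ := hcov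
  set P : Finset (T × T) := S₀ ×ˢ S₀ with hP
  set Arc : T × T → Set T := fun q => geo hex q.1 q.2 '' Icc 0 (dist q.1 q.2) with hArc
  have hcover : ∀ x : T, ∃ q ∈ P, x ∈ Arc q := by
    intro x
    obtain ⟨a, ha, b, hb, γ, hγ, t, ht, hxt⟩ := hS₀ x
    refine ⟨(a, b), Finset.mem_product.2 ⟨ha, hb⟩, t, ht, ?_⟩
    rw [← hun a b γ (geo hex a b) hγ (geo_spec hex a b) ht]
    exact hxt
  set K : Finset (T × T) := P.filter (fun q => m ∉ Arc q) with hK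
  have hKpos : ∀ q ∈ K, 0 < infDist m (Arc q) := by
    intro q hq
    have hcl : IsClosed (Arc q) := (arc_compact hex hun q.1 q.2).isClosed
    exact (hcl.notMem_iff_infDist_pos (arc_nonempty hex hun q.1 q.2)).1
      (Finset.mem_filter.1 hq).2
  set r : ℝ := if h : K.Nonempty then min 1 (K.inf' h fun q => infDist m (Arc q)) else 1
    with hr
  have hr0 : 0 < r := by
    rw [hr]
    split_ifs with h
    · refine lt_min one_pos ?_
      rw [Finset.lt_inf'_iff]
      exact fun q hq => hKpos q hq
    · exact one_pos
  refine ⟨r, hr0, fun δ hδ0 hδr => ?_⟩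
  have hsub : {p : T | dist m p = δ} ⊆ ⋃ q ∈ P, (Arc q ∩ {p : T | dist m p = δ}) := by
    intro p hp
    obtain ⟨q, hq, hpq⟩ := hcover p
    exact Set.mem_biUnion hq ⟨hpq, hp⟩
  refine Set.Finite.subset (Set.Finite.biUnion P.finite_toSet fun q hq => ?_) hsub
  by_cases hm : m ∈ Arc q
  · obtain ⟨t, ht, hmt⟩ := hm
    refine Set.Finite.subset ((Set.finite_singleton (geo hex q.1 q.2 (t + δ))).insert
      (geo hex q.1 q.2 (t - δ))) ?_
    rintro p ⟨⟨s, hs, rfl⟩, hpd⟩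
    have hds := (geo_spec hex q.1 q.2).2.2 t ht s hs
    rw [hmt] at hds
    simp only [Set.mem_setOf_eq] at hpd
    have habs : t - s = δ ∨ t - s = -δ := abs_eq hδ0.le |>.1 (by rw [← hds]; exact hpd)
    rw [Set.mem_insert_iff, Set.mem_singleton_iff]
    rcases habs with h | h
    · left; rw [show t - δ = s by linarith]
    · right; rw [show t + δ = s by linarith]
  · have hqK : q ∈ K := Finset.mem_filter.2 ⟨hq, hm⟩
    have hrle : r ≤ infDist m (Arc q) := by
      rw [hr, dif_pos ⟨q, hqK⟩]
      exact le_trans (min_le_right _ _) (Finset.inf'_le _ hqK)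
    have hempty : Arc q ∩ {p : T | dist m p = δ} = ∅ := by
      ext p
      simp only [Set.mem_inter_iff, Set.mem_setOf_eq, Set.mem_empty_iff_false, iff_false,
        not_and]
      intro hpA hpd
      have h1 : infDist m (Arc q) ≤ dist m p := infDist_le_dist_of_mem hpA
      rw [hpd] at h1
      linarith
    rw [hempty]
    exact Set.finite_empty


/-- Two points `z, w` point in the same direction at `m`: their geodesics from `m`
share an initial gate. -/
def rel (m z w : T) : Prop :=
  ∃ δ : ℝ, 0 < δ ∧ δ ≤ dist m z ∧ δ ≤ dist m w ∧ geo hex m z δ = geo hex m w δ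

lemma rel_refl {m z : T} (hz : z ≠ m) : rel hex m z z :=
  ⟨dist m z, dist_pos.2 (Ne.symm hz), le_refl _, le_refl _, rfl⟩

lemma rel_symm {m z w : T} (h : rel hex m z w) : rel hex m w z := by
  obtain ⟨δ, h1, h2, h3, h4⟩ := h
  exact ⟨δ, h1, h3, h2, h4.symm⟩

lemma gate_down {m z w : T} {δ δ₁ : ℝ} (h0 : 0 < δ) (hd : δ ≤ δ₁)
    (hz : δ₁ ≤ dist m z) (hw : δ₁ ≤ dist m w) (h1 : 0 ≤ δ₁)
    (heq : geo hex m z δ₁ = geo hex m w δ₁) :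
    geo hex m z δ = geo hex m w δ := by
  rw [gate_gate hex hun h0.le hd ⟨h1, hz⟩, gate_gate hex hun h0.le hd ⟨h1, hw⟩, heq]

lemma rel_trans {m z w v : T} (h1 : rel hex m z w) (h2 : rel hex m w v) :
    rel hex m z v := by
  obtain ⟨δ₁, ha1, ha2, ha3, ha4⟩ := h1
  obtain ⟨δ₂, hb1, hb2, hb3, hb4⟩ := h2
  refine ⟨min δ₁ δ₂, lt_min ha1 hb1, le_trans (min_le_left _ _) ha2,
    le_trans (min_le_right _ _) hb3, ?_⟩
  rw [gate_down hex hun (lt_min ha1 hb1) (min_le_left _ _) ha2 ha3 ha1.le ha4,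
    gate_down hex hun (lt_min ha1 hb1) (min_le_right _ _) hb2 hb3 hb1.le hb4]


variable (hcov : ∃ S : Finset T, ∀ x : T, ∃ a ∈ S, ∃ b ∈ S, ∃ γ : ℝ → T,
      IsGeodesicSeg a b γ ∧ x ∈ γ '' Set.Icc 0 (dist a b))

include hcov

lemma rel_locally_const (m z : T) (hz : z ≠ m) :
    ∃ N : Set T, IsOpen N ∧ z ∈ N ∧ N ⊆ {m}ᶜ ∧ ∀ w ∈ N, rel hex m w z := by
  classical
  obtain ⟨r, hr0, hrfin⟩ := sphere_finite hex hun hcov m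
  have hdz : 0 < dist m z := dist_pos.2 (Ne.symm hz)
  set δ : ℝ := min (dist m z) r / 2 with hδ
  have hδ0 : 0 < δ := by positivity
  have hδz : δ < dist m z := by
    have : min (dist m z) r ≤ dist m z := min_le_left _ _
    rw [hδ]; linarith
  have hδr : δ < r := by
    have : min (dist m z) r ≤ r := min_le_right _ _
    rw [hδ]; linarith
  have hfin : {p : T | dist m p = δ}.Finite := hrfin δ hδ0 hδr
  set p₀ : T := geo hex m z δ with hp₀
  have hmp₀ : dist m p₀ = δ := dist_geo_left hex ⟨hδ0.le, hδz.le⟩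
  set F' : Set T := {p : T | dist m p = δ} \ {p₀} with hF'
  have hF'fin : F'.Finite := hfin.diff
  set N : Set T := {w : T | δ < dist m w} ∩ ⋂ p ∈ F', {w : T | dist m w ≠ δ + dist p w}
    with hN
  have hNopen : IsOpen N := by
    refine IsOpen.inter (isOpen_lt continuous_const (continuous_const.dist continuous_id))
      (hF'fin.isOpen_biInter fun p _ => ?_)
    exact isOpen_ne_fun (continuous_const.dist continuous_id)
      (continuous_const.add (continuous_const.dist continuous_id))
  have hzN : z ∈ N := by
    refine ⟨hδz, Set.mem_biInter fun p hp => ?_⟩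
    intro hcon
    have hp' : dist m p = δ := hp.1
    have : geo hex m z δ = p := between_gate hex hun hδ0.le hp' hcon
    exact hp.2 (by rw [← this]; exact Set.mem_singleton _)
  have hNsub : N ⊆ {m}ᶜ := by
    intro w hw
    have : δ < dist m w := hw.1
    simp only [Set.mem_compl_iff, Set.mem_singleton_iff]
    intro he; rw [he, dist_self] at this; linarith
  refine ⟨N, hNopen, hzN, hNsub, fun w hw => ?_⟩
  have hδw : δ ≤ dist m w := hw.1.le
  set pw : T := geo hex m w δ with hpw
  have hmpw : dist m pw = δ := dist_geo_left hex ⟨hδ0.le, hδw⟩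
  have hbtw : dist m w = δ + dist pw w := by
    have := dist_geo_right hex (a := m) (b := w) ⟨hδ0.le, hδw⟩
    rw [← hpw] at this; linarith
  have hpweq : pw = p₀ := by
    by_contra hne
    have hpF' : pw ∈ F' := ⟨hmpw, hne⟩
    have h2 := hw.2
    rw [Set.mem_iInter₂] at h2
    exact h2 pw hpF' hbtw
  exact ⟨δ, hδ0, hδw, hδz.le, by rw [← hpw, ← hp₀, hpweq]⟩


lemma rel_of_mem_component {m x : T} (hx : x ≠ m) :
    ∀ a ∈ connectedComponentIn ({m}ᶜ) x, rel hex m a x := by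
  classical
  choose N hopen hmem hsub hrel using fun (w : T) (hw : w ≠ m) =>
    rel_locally_const hex hun hcov m w hw
  set u : Set T := ⋃ (w : T) (hw : w ≠ m) (_ : rel hex m w x), N w hw with hu
  set v : Set T := ⋃ (w : T) (hw : w ≠ m) (_ : ¬ rel hex m w x), N w hw with hv
  have huo : IsOpen u :=
    isOpen_iUnion fun w => isOpen_iUnion fun hw => isOpen_iUnion fun _ => hopen w hw
  have hvo : IsOpen v :=
    isOpen_iUnion fun w => isOpen_iUnion fun hw => isOpen_iUnion fun _ => hopen w hw
  have hdisj : Disjoint u v := by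
    rw [Set.disjoint_left]
    rintro y hyu hyv
    simp only [hu, hv, Set.mem_iUnion] at hyu hyv
    obtain ⟨w, hw, hwx, hyN⟩ := hyu
    obtain ⟨w', hw', hw'x, hyN'⟩ := hyv
    have h1 : rel hex m y w := hrel w hw y hyN
    have h2 : rel hex m y w' := hrel w' hw' y hyN'
    exact hw'x (rel_trans hex hun (rel_trans hex hun (rel_symm hex hun h2) h1) hwx)
  have hVsub : connectedComponentIn ({m}ᶜ : Set T) x ⊆ u ∪ v := by
    intro y hy
    have hy' : y ≠ m := by
      have := connectedComponentIn_subset ({m}ᶜ : Set T) x hy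
      simpa using this
    by_cases hyx : rel hex m y x
    · exact Or.inl (Set.mem_iUnion.2 ⟨y, Set.mem_iUnion.2 ⟨hy',
        Set.mem_iUnion.2 ⟨hyx, hmem y hy'⟩⟩⟩)
    · exact Or.inr (Set.mem_iUnion.2 ⟨y, Set.mem_iUnion.2 ⟨hy',
        Set.mem_iUnion.2 ⟨hyx, hmem y hy'⟩⟩⟩)
  have hpre : IsPreconnected (connectedComponentIn ({m}ᶜ : Set T) x) :=
    (isConnected_connectedComponentIn_iff.2 (by simpa using hx)).isPreconnected
  rcases hpre.subset_or_subset huo hvo hdisj hVsub with h | h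
  · intro a ha
    have hau := h ha
    simp only [hu, Set.mem_iUnion] at hau
    obtain ⟨w, hw, hwx, haN⟩ := hau
    exact rel_trans hex hun (hrel w hw a haN) hwx
  · exfalso
    have hxm : x ∈ connectedComponentIn ({m}ᶜ : Set T) x :=
      mem_connectedComponentIn (by simpa using hx)
    have hxv := h hxm
    simp only [hv, Set.mem_iUnion] at hxv
    obtain ⟨w, hw, hwx, hxN⟩ := hxv
    exact hwx (rel_symm hex hun (hrel w hw x hxN))

end Geo


/-- The barycenter set of a finitely supported probability measure on a finite
metric tree is nonempty. -/
theorem stmt_17 {T : Type*} [MetricSpace T] [MeasurableSpace T] [BorelSpace T]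
    [Nonempty T] (hT : IsFinMetricTree T)
    (ν : MeasureTheory.Measure T) [MeasureTheory.IsProbabilityMeasure ν]
    (hfin : ∃ S : Finset T, ν ((↑S : Set T)ᶜ) = 0) :
    (barycenterSet ν).Nonempty := by
  classical
  obtain ⟨hcomp, hex, hun, hcov⟩ := hT
  haveI : CompactSpace T := hcomp
  obtain ⟨S, hS⟩ := hfin
  set w : T → ℝ := fun a => (ν {a}).toReal with hw
  have hw0 : ∀ a, 0 ≤ w a := fun a => ENNReal.toReal_nonneg
  set f : T → ℝ := fun s => ∑ a ∈ S, w a * dist s a with hf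
  have hfc : Continuous f :=
    continuous_finset_sum _ fun a _ =>
      continuous_const.mul (Continuous.dist continuous_id continuous_const)
  obtain ⟨m, -, hm⟩ := isCompact_univ.exists_isMinOn Set.univ_nonempty hfc.continuousOn
  -- measure of finite sets as sums
  have hmeasF : ∀ B : Finset T, ν (↑B : Set T) = ∑ a ∈ B, ν {a} := by
    intro B
    have hB : (↑B : Set T) = ⋃ a ∈ B, {a} := (Set.biUnion_of_singleton (↑B : Set T)).symm
    rw [hB, MeasureTheory.measure_biUnion_finset ?_ fun b _ => measurableSet_singleton b]
    intro a _ b _ hab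
    simp [Set.disjoint_singleton, hab]
  have hνtop : ∀ s : Set T, ν s ≠ ⊤ := fun s => MeasureTheory.measure_ne_top ν s
  have hνS : ν (↑S : Set T) = 1 := by
    have h1 := MeasureTheory.measure_add_measure_compl (μ := ν) S.finite_toSet.measurableSet
    rw [hS, add_zero] at h1
    rw [h1]
    exact MeasureTheory.measure_univ
  have hS1 : ∑ a ∈ S, w a = 1 := by
    rw [hw]
    rw [← ENNReal.toReal_sum fun a _ => hνtop {a}, ← hmeasF, hνS, ENNReal.toReal_one]
  refine ⟨m, ?_⟩
  intro x hx
  by_contra hcon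
  push_neg at hcon
  set U : Set T := connectedComponentIn ({m}ᶜ) x with hU
  set A : Finset T := S.filter (fun a => a ∈ U) with hA
  have hAsub : A ⊆ S := Finset.filter_subset _ _
  have hUA : U ∩ (↑S : Set T) = (↑A : Set T) := by
    ext y
    simp only [Set.mem_inter_iff, hA, Finset.coe_filter, Set.mem_setOf_eq,
      Finset.mem_coe]
    tauto
  have hUeq : ν U = ν (↑A : Set T) := by
    have h1 := MeasureTheory.measure_inter_add_diff (μ := ν) U S.finite_toSet.measurableSet
    have h2 : ν (U \ (↑S : Set T)) = 0 :=
      MeasureTheory.measure_mono_null (fun y hy => hy.2) hS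
    rw [h2, add_zero] at h1
    rw [← h1, hUA]
  have hwA : ∑ a ∈ A, w a = (ν (↑A : Set T)).toReal := by
    rw [hmeasF, ENNReal.toReal_sum fun a _ => hνtop {a}]
  have hAhalf : 1 / 2 < ∑ a ∈ A, w a := by
    rw [hwA]
    have hlt : (1 / 2 : ℝ≥0∞) < ν (↑A : Set T) := by rw [← hUeq]; exact hcon
    have := ENNReal.toReal_lt_toReal (by norm_num) (hνtop (↑A : Set T)) |>.2 hlt
    calc (1 : ℝ) / 2 = ((1 / 2 : ℝ≥0∞)).toReal := by norm_num
      _ < _ := this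
  have hwSA : ∑ a ∈ S \ A, w a = 1 - ∑ a ∈ A, w a := by
    have := Finset.sum_sdiff (f := w) hAsub
    linarith [hS1, this]
  -- A is nonempty
  have hAne : A.Nonempty := by
    rcases Finset.eq_empty_or_nonempty A with h | h
    · rw [h] at hAhalf; simp at hAhalf; linarith
    · exact h
  -- all points of A are related to each other at m
  have hmemU : ∀ a ∈ A, a ∈ U := fun a ha => (Finset.mem_filter.1 ha).2
  have hrelx : ∀ a ∈ A, rel hex m a x :=
    fun a ha => rel_of_mem_component hex hun hcov hx a (hmemU a ha)
  obtain ⟨a₀, ha₀⟩ := id hAne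
  have hrelA : ∀ a ∈ A, rel hex m a a₀ := fun a ha =>
    rel_trans hex hun (hrelx a ha) (rel_symm hex hun (hrelx a₀ ha₀))
  choose! δa hδ1 hδ2 hδ3 hδ4 using hrelA
  set ε : ℝ := A.inf' hAne δa with hε
  have hε0 : 0 < ε := by
    rw [hε, Finset.lt_inf'_iff]
    exact fun a ha => hδ1 a ha
  have hεle : ∀ a ∈ A, ε ≤ δa a := fun a ha => Finset.inf'_le _ ha
  set p : T := geo hex m a₀ ε with hp
  have hgate : ∀ a ∈ A, geo hex m a ε = p := by
    intro a ha
    exact gate_down hex hun hε0 (hεle a ha) (hδ2 a ha) (hδ3 a ha) (hδ1 a ha).le (hδ4 a ha)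
  have hdistpm : dist m p = ε := by
    rw [hp]
    exact dist_geo_left hex ⟨hε0.le, le_trans (hεle a₀ ha₀) (hδ2 a₀ ha₀)⟩
  have hdistpa : ∀ a ∈ A, dist p a = dist m a - ε := by
    intro a ha
    rw [← hgate a ha]
    exact dist_geo_right hex ⟨hε0.le, le_trans (hεle a ha) (hδ2 a ha)⟩
  -- compare f p with f m
  have hfp : f p ≤ f m + ε * ((∑ a ∈ S \ A, w a) - ∑ a ∈ A, w a) := by
    have hsplit : ∀ g : T → ℝ, ∑ a ∈ S, g a = ∑ a ∈ S \ A, g a + ∑ a ∈ A, g a :=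
      fun g => (Finset.sum_sdiff hAsub).symm
    rw [hf]
    simp only []
    rw [hsplit (fun a => w a * dist p a), hsplit (fun a => w a * dist m a)]
    have h1 : ∑ a ∈ S \ A, w a * dist p a ≤
        ∑ a ∈ S \ A, (w a * dist m a + w a * ε) := by
      refine Finset.sum_le_sum fun a _ => ?_
      have : dist p a ≤ dist m a + ε := by
        have := dist_triangle p m a
        rw [dist_comm p m, hdistpm] at this
        linarith
      nlinarith [hw0 a]
    have h2 : ∑ a ∈ A, w a * dist p a = ∑ a ∈ A, (w a * dist m a - w a * ε) := by
      refine Finset.sum_congr rfl fun a ha => ?_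
      rw [hdistpa a ha]; ring
    have h3 : ∑ a ∈ S \ A, w a * ε = (∑ a ∈ S \ A, w a) * ε := (Finset.sum_mul _ _ _).symm
    have h4 : ∑ a ∈ A, (w a * dist m a - w a * ε)
        = ∑ a ∈ A, w a * dist m a - (∑ a ∈ A, w a) * ε := by
      rw [Finset.sum_sub_distrib, Finset.sum_mul]
    rw [h2, h4]
    rw [Finset.sum_add_distrib, h3] at h1
    nlinarith
  have hneg : ε * ((∑ a ∈ S \ A, w a) - ∑ a ∈ A, w a) < 0 := by
    apply mul_neg_of_pos_of_neg hε0
    rw [hwSA]; linarith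
  have := hm (Set.mem_univ p)
  simp only [hf, Set.mem_setOf_eq] at this hfp
  linarith [this]
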